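/- arXiv:1805.03811 — 3 statements merged into one kernel-verified Lean document; each statement's English description precedes it below -/
import Mathlib

section
/- Let λ, μ be real numbers with μ > 0 and λ + μ > 0. Let ξ¹, ξ² ∈ ℝ³ be unit vectors with ξ¹·ξ² ≠ 1, and let τ¹, τ² ∈ ℝ satisfy (τ¹)² = (τ²)² = λ + 2μ and τ¹τ² = λ + 2μ (so the covectors ζⁱ = (τⁱ, ξⁱ) are P-characteristic and lie on the same half of the light cone). Then for all a, b ∈ ℝ, if (aτ¹ + bτ²)² = (λ + 2μ)·|aξ¹ + bξ²|², then ab = 0. (In other words, no nontrivial linear combination of two transversal P-characteristic covectors is again P-characteristic: this is part (1) of the lemma on P–P interactions.) -/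
/-!
Since `τ1² = τ2² = τ1 τ2 = c` with `c = λ + 2μ`, the time part is `(a τ1 + b τ2)² = c (a + b)²`,
while for unit `ξ1, ξ2` the space part is `c (a² + 2ab (ξ1·ξ2) + b²)`. Their difference is
`2ab c (1 - ξ1·ξ2)`, and `c > 0`, `ξ1·ξ2 ≠ 1` leave only `ab = 0`.
-/

def dot (x y : Fin 3 → ℝ) : ℝ := ∑ i, x i * y i

theorem dot_add_smul_self (a b : ℝ) (x y : Fin 3 → ℝ) :
    dot (a • x + b • y) (a • x + b • y)
      = a ^ 2 * dot x x + 2 * (a * b) * dot x y + b ^ 2 * dot y y := by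
  simp only [dot, Fin.sum_univ_three, Pi.add_apply, Pi.smul_apply, smul_eq_mul]
  ring

theorem mul_eq_zero_of_sq_add_mul_eq {c s τ1 τ2 a b : ℝ} (hc : c ≠ 0) (hs : s ≠ 1)
    (hτ1 : τ1 ^ 2 = c) (hτ2 : τ2 ^ 2 = c) (hτ12 : τ1 * τ2 = c)
    (h : (a * τ1 + b * τ2) ^ 2 = c * (a ^ 2 + 2 * (a * b) * s + b ^ 2)) :
    a * b = 0 := by
  have hdiff : c * (2 * (a * b)) * (1 - s) = 0 := by
    linear_combination h - a ^ 2 * hτ1 - 2 * a * b * hτ12 - b ^ 2 * hτ2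
  simpa [hc, sub_eq_zero, hs.symm] using hdiff

/-- No nontrivial linear combination of two transversal P-characteristic covectors
(lying on the same half of the light cone) is again P-characteristic. -/
theorem pp_interaction_no_P (lam mu : ℝ) (hmu : 0 < mu) (hlm : 0 < lam + mu)
    (ξ1 ξ2 : Fin 3 → ℝ) (hξ1 : dot ξ1 ξ1 = 1) (hξ2 : dot ξ2 ξ2 = 1)
    (hne : dot ξ1 ξ2 ≠ 1)
    (τ1 τ2 : ℝ) (hτ1 : τ1 ^ 2 = lam + 2 * mu) (hτ2 : τ2 ^ 2 = lam + 2 * mu)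
    (hτ12 : τ1 * τ2 = lam + 2 * mu) :
    ∀ a b : ℝ,
      (a * τ1 + b * τ2) ^ 2
        = (lam + 2 * mu) * dot (a • ξ1 + b • ξ2) (a • ξ1 + b • ξ2) →
      a * b = 0 := by
  intro a b h
  have hc : lam + 2 * mu ≠ 0 := by linarith
  rw [dot_add_smul_self, hξ1, hξ2, mul_one, mul_one] at h
  exact mul_eq_zero_of_sq_add_mul_eq hc hne hτ1 hτ2 hτ12 h
end

section
/- Let λ, μ be real numbers with μ > 0 and λ + μ > 0. Let ξ¹, ξ² ∈ ℝ³ be linearly independent unit vectors, and let τ¹, τ² ∈ ℝ satisfy (τ¹)² = (τ²)² = λ + 2μ and τ¹τ² = λ + 2μ. Then there exist real numbers b₊ ≠ b₋ with b₊·b₋ = 1 (in particular both nonzero) such that each b ∈ {b₊, b₋} is a root of the quadratic equation (λ + μ)b² + 2((λ + 2μ) − μ(ξ¹·ξ²))b + (λ + μ) = 0 and satisfies (τ¹ + bτ²)² = μ·|ξ¹ + bξ²|². Moreover the two covectors (τ¹ + b₊τ², ξ¹ + b₊ξ²) and (τ¹ + b₋τ², ξ¹ + b₋ξ²) are linearly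 independent in ℝ × ℝ³. (Two transversally interacting P-characteristic covectors always produce exactly two independent S-characteristic combinations: part (2) of the lemma on P–P interactions.) -/
open Matrix

theorem dot_eq_dotProduct (x y : Fin 3 → ℝ) : dot x y = x ⬝ᵥ y := rfl

section DotProduct

variable {n R : Type*} [Fintype n] [CommRing R]

theorem add_smul_dotProduct_add_smul (x y : n → R) (b : R) :
    (x + b • y) ⬝ᵥ (x + b • y) = x ⬝ᵥ x + 2 * b * (x ⬝ᵥ y) + b ^ 2 * (y ⬝ᵥ y) := by
  simp only [add_dotProduct, dotProduct_add, smul_dotProduct, dotProduct_smul, smul_eq_mul,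
    dotProduct_comm y x]
  ring

theorem dotProduct_lt_one_of_ne [LinearOrder R] [IsStrictOrderedRing R] {x y : n → R}
    (hx : x ⬝ᵥ x = 1) (hy : y ⬝ᵥ y = 1) (hxy : x ≠ y) : x ⬝ᵥ y < 1 := by
  have hpos : 0 < (x - y) ⬝ᵥ (x - y) :=
    lt_of_le_of_ne (Finset.sum_nonneg fun i _ => mul_self_nonneg _)
      (Ne.symm (dotProduct_self_eq_zero.not.mpr (sub_ne_zero.mpr hxy)))
  have hexp : (x - y) ⬝ᵥ (x - y) = 2 - 2 * (x ⬝ᵥ y) := by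
    simp only [sub_dotProduct, dotProduct_sub, dotProduct_comm y x, hx, hy]
    ring
  linarith

end DotProduct

theorem exists_roots_of_palindromic_quadratic {A B : ℝ} (hA : A ≠ 0) (hAB : A ^ 2 < B ^ 2) :
    ∃ bp bm : ℝ, bp ≠ bm ∧ bp * bm = 1 ∧
      ∀ b ∈ ({bp, bm} : Set ℝ), A * b ^ 2 + 2 * B * b + A = 0 := by
  set r := √(B ^ 2 - A ^ 2)
  have hr : r ^ 2 = B ^ 2 - A ^ 2 := Real.sq_sqrt (by linarith)
  have hr0 : r ≠ 0 := (Real.sqrt_pos.mpr (by linarith)).ne'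
  refine ⟨(-B + r) / A, (-B - r) / A, ?_, ?_, ?_⟩
  · intro h
    field_simp at h
    exact hr0 (by linarith)
  · field_simp
    linear_combination -hr
  · rintro b (rfl | rfl) <;> field_simp <;> linear_combination hr

theorem LinearIndependent.pair_prod_add_smul {R M : Type*} [Field R] [AddCommGroup M]
    [Module R M] {x y : M} (h : LinearIndependent R ![x, y]) {a b : R} (hab : a ≠ b) (s t : R) :
    LinearIndependent R ![((s, x + a • y) : R × M), (t, x + b • y)] := by
  have hsnd : LinearMap.snd R R M ∘ ![((s, x + a • y) : R × M), (t, x + b • y)] =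
      ![x + a • y, x + b • y] := by
    ext i : 1
    fin_cases i <;> rfl
  apply LinearIndependent.of_comp (LinearMap.snd R R M)
  rw [hsnd]
  simpa using (LinearIndependent.pair_add_smul_add_smul_iff 1 a 1 b).mpr
    ⟨h, by simpa using hab.symm⟩

def IsSCharacteristic (mu τ : ℝ) (ξ : Fin 3 → ℝ) : Prop :=
  τ ^ 2 = mu * dot ξ ξ

theorem isSCharacteristic_add_smul_of_root {lam mu τ1 τ2 b : ℝ} {ξ1 ξ2 : Fin 3 → ℝ}
    (hξ1 : dot ξ1 ξ1 = 1) (hξ2 : dot ξ2 ξ2 = 1)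
    (hτ1 : τ1 ^ 2 = lam + 2 * mu) (hτ2 : τ2 ^ 2 = lam + 2 * mu)
    (hτ12 : τ1 * τ2 = lam + 2 * mu)
    (hb : (lam + mu) * b ^ 2 + 2 * ((lam + 2 * mu) - mu * dot ξ1 ξ2) * b + (lam + mu) = 0) :
    IsSCharacteristic mu (τ1 + b * τ2) (ξ1 + b • ξ2) := by
  simp only [IsSCharacteristic, dot_eq_dotProduct] at hξ1 hξ2 hb ⊢
  rw [add_smul_dotProduct_add_smul, hξ1, hξ2]
  linear_combination hτ1 + 2 * b * hτ12 + b ^ 2 * hτ2 + hb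

/-- Two transversally interacting P-characteristic covectors always produce exactly
two linearly independent S-characteristic combinations. -/
theorem pp_interaction_two_S (lam mu : ℝ) (hmu : 0 < mu) (hlm : 0 < lam + mu)
    (ξ1 ξ2 : Fin 3 → ℝ) (hind : LinearIndependent ℝ ![ξ1, ξ2])
    (hξ1 : dot ξ1 ξ1 = 1) (hξ2 : dot ξ2 ξ2 = 1)
    (τ1 τ2 : ℝ) (hτ1 : τ1 ^ 2 = lam + 2 * mu) (hτ2 : τ2 ^ 2 = lam + 2 * mu)
    (hτ12 : τ1 * τ2 = lam + 2 * mu) :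
    ∃ bp bm : ℝ, bp ≠ bm ∧ bp * bm = 1 ∧
      (∀ b ∈ ({bp, bm} : Set ℝ),
        (lam + mu) * b ^ 2 + 2 * ((lam + 2 * mu) - mu * dot ξ1 ξ2) * b + (lam + mu) = 0 ∧
        (τ1 + b * τ2) ^ 2 = mu * dot (ξ1 + b • ξ2) (ξ1 + b • ξ2)) ∧
      LinearIndependent ℝ
        ![((τ1 + bp * τ2, ξ1 + bp • ξ2) : ℝ × (Fin 3 → ℝ)),
          ((τ1 + bm * τ2, ξ1 + bm • ξ2) : ℝ × (Fin 3 → ℝ))] := by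
  have hξ : ξ1 ≠ ξ2 := by simpa using hind.injective.ne zero_ne_one
  have hs : dot ξ1 ξ2 < 1 := dotProduct_lt_one_of_ne hξ1 hξ2 hξ
  have hAB : lam + mu < (lam + 2 * mu) - mu * dot ξ1 ξ2 := by
    linarith [mul_lt_mul_of_pos_left hs hmu]
  obtain ⟨bp, bm, hne, hprod, hroot⟩ :=
    exists_roots_of_palindromic_quadratic hlm.ne' (pow_lt_pow_left₀ hAB hlm.le two_ne_zero)
  exact ⟨bp, bm, hne, hprod,
    fun b hb => ⟨hroot b hb, isSCharacteristic_add_smul_of_root hξ1 hξ2 hτ1 hτ2 hτ12 (hroot b hb)⟩,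
    hind.pair_prod_add_smul hne _ _⟩
end

section
/- Let λ, μ, A, B, C be real numbers, let ξ¹, ξ², a¹, a², w ∈ ℝ³, and let 𝒢 = 𝒢_C be the symmetrized interaction symbol matrix (depending on the parameter C) and ξ = ξ¹ + ξ². If a¹·ξ¹ = 0, or a²·ξ² = 0, or w·ξ = 0, then the scalar w·(𝒢_C ξ) does not depend on C; precisely, w·(𝒢_C ξ) = w·(𝒢₀ ξ) where 𝒢₀ is the same matrix with C replaced by 0. (Since S waves have polarization orthogonal to their wave covector and P–P interactions only generate S-characteristic output directions, the principal symbols of all nonlinear responses generated by the interaction of two distorted plane waves are independent of the parameter C; this is the algebraic content of the proposition stating that C cannot be recovered from the leading term of the nonlinear response.) -/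
/-- Symmetrized strain symbol matrix U of a wave with polarization a and covector ξ. -/
noncomputable def Umat (a ξ : Fin 3 → ℝ) : Matrix (Fin 3) (Fin 3) ℝ :=
  fun m n => (a m * ξ n + ξ m * a n) / 2

/-- The (unsymmetrized) interaction symbol matrix 𝔤(ξ¹, a¹; ξ², a²). -/
noncomputable def gfrak (lam mu A B C : ℝ) (ξ1 a1 ξ2 a2 : Fin 3 → ℝ) : Matrix (Fin 3) (Fin 3) ℝ :=
  fun m n =>
    lam * dot a1 ξ1 * a2 m * ξ2 n
      + (lam / 2) * dot a1 a2 * dot ξ1 ξ2 * (if m = n then 1 else 0)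
      + 2 * mu * (∑ j, Umat a1 ξ1 n j * (a2 m * ξ2 j))
      + mu * dot a1 a2 * ξ1 m * ξ2 n
      + A * (∑ j, Umat a1 ξ1 m j * Umat a2 ξ2 n j)
      + B * (2 * dot a1 ξ1 * Umat a2 ξ2 m n
          + (∑ i, ∑ j, Umat a1 ξ1 i j * Umat a2 ξ2 i j) * (if m = n then 1 else 0))
      + C * dot a1 ξ1 * dot a2 ξ2 * (if m = n then 1 else 0)

/-- The symmetrized interaction symbol matrix 𝒢. -/
noncomputable def Gsym (lam mu A B C : ℝ) (ξ1 a1 ξ2 a2 : Fin 3 → ℝ) : Matrix (Fin 3) (Fin 3) ℝ :=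
  gfrak lam mu A B C ξ1 a1 ξ2 a2 + gfrak lam mu A B C ξ2 a2 ξ1 a1

theorem dot_mulVec_add_smul_one (M : Matrix (Fin 3) (Fin 3) ℝ) (c : ℝ) (w v : Fin 3 → ℝ) :
    dot w ((M + c • (1 : Matrix (Fin 3) (Fin 3) ℝ)).mulVec v) =
      dot w (M.mulVec v) + c * dot w v := by
  simp only [dot, ← dotProduct.eq_1, Matrix.add_mulVec, Matrix.smul_mulVec, Matrix.one_mulVec,
    dotProduct_add, dotProduct_smul, smul_eq_mul]

theorem gfrak_eq_add_smul_one (lam mu A B C : ℝ) (ξ1 a1 ξ2 a2 : Fin 3 → ℝ) :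
    gfrak lam mu A B C ξ1 a1 ξ2 a2 =
      gfrak lam mu A B 0 ξ1 a1 ξ2 a2 + (C * dot a1 ξ1 * dot a2 ξ2) • 1 := by
  ext m n
  simp only [gfrak, Matrix.add_apply, Matrix.smul_apply, Matrix.one_apply, smul_eq_mul]
  ring

theorem Gsym_eq_add_smul_one (lam mu A B C : ℝ) (ξ1 a1 ξ2 a2 : Fin 3 → ℝ) :
    Gsym lam mu A B C ξ1 a1 ξ2 a2 =
      Gsym lam mu A B 0 ξ1 a1 ξ2 a2 + (2 * C * dot a1 ξ1 * dot a2 ξ2) • 1 := by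
  simp only [Gsym, gfrak_eq_add_smul_one lam mu A B C]
  module

/-- If either polarization is orthogonal to its wave covector, or the output test
direction is orthogonal to ξ = ξ¹ + ξ², then the scalar w·(𝒢_C ξ) does not depend
on the parameter C. -/
theorem symbol_independent_of_C (lam mu A B C : ℝ) (ξ1 ξ2 a1 a2 w : Fin 3 → ℝ)
    (h : dot a1 ξ1 = 0 ∨ dot a2 ξ2 = 0 ∨ dot w (ξ1 + ξ2) = 0) :
    dot w ((Gsym lam mu A B C ξ1 a1 ξ2 a2).mulVec (ξ1 + ξ2)) =
      dot w ((Gsym lam mu A B 0 ξ1 a1 ξ2 a2).mulVec (ξ1 + ξ2)) := by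
  rw [Gsym_eq_add_smul_one, dot_mulVec_add_smul_one, add_eq_left]
  rcases h with h | h | h <;> simp [h]
end
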